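/- Let (L, (h_1, h_2, h_3)) be a forward self-similar system with m = 3 such that h_j : L → L is injective for each j = 1, 2, 3, L_x is connected for every infinite word x ∈ {1, 2, 3}^ℕ, and L is disconnected. Then L has infinitely many connected components, and there exists j ∈ {1, 2, 3} such that L_{(j)^∞} is a connected component of L, where (j)^∞ denotes the constant infinite word (j, j, j, …). -/

import Mathlib

set_option linter.unusedSectionVars false
set_option linter.unusedVariables false
set_option maxHeartbeats 1000000



open Set

/-- `h_{w̄}(L)` for a finite word `w = (w₁, …, w_k)`, encoded as the list `[w₁, …, w_k]`,
namely `h_{w₁}(h_{w₂}(⋯ h_{w_k}(L) ⋯))`, where `L` is the whole space. -/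
def fwdIm {L : Type*} {m : ℕ} (h : Fin m → L → L) : List (Fin m) → Set L
  | [] => Set.univ
  | a :: w => h a '' fwdIm h w

/-- The truncation `x|k` of an infinite word `x`. -/
def wordTrunc {m : ℕ} (x : ℕ → Fin m) (k : ℕ) : List (Fin m) :=
  List.ofFn fun i : Fin k => x i.val

/-- `L_x = ⋂_{j ≥ 1} h_{x₁}(h_{x₂}(⋯ h_{x_j}(L) ⋯))`. -/
def fwdLimSet {L : Type*} {m : ℕ} (h : Fin m → L → L) (x : ℕ → Fin m) : Set L :=
  ⋂ j : ℕ, fwdIm h (wordTrunc x (j + 1))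

namespace FSSAux

variable {L : Type*} [MetricSpace L] [CompactSpace L]

/-- Composite map `h_{w₁} ∘ ⋯ ∘ h_{w_k}`. -/
def mapw {m : ℕ} (h : Fin m → L → L) : List (Fin m) → L → L
  | [] => id
  | a :: w => h a ∘ mapw h w

variable {m : ℕ} (h : Fin m → L → L)

theorem mapw_cont (hcont : ∀ j, Continuous (h j)) : ∀ w, Continuous (mapw h w)
  | [] => continuous_id
  | a :: w => (hcont a).comp (mapw_cont hcont w)

theorem mapw_inj (hinj : ∀ j, Function.Injective (h j)) :
    ∀ w, Function.Injective (mapw h w)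
  | [] => fun _ _ hxy => hxy
  | a :: w => (hinj a).comp (mapw_inj hinj w)

theorem fwdIm_eq : ∀ w, fwdIm h w = mapw h w '' univ
  | [] => by simp [fwdIm, mapw]
  | a :: w => by
      show h a '' fwdIm h w = (h a ∘ mapw h w) '' univ
      rw [Set.image_comp, fwdIm_eq w]

theorem fwdIm_append : ∀ w v, fwdIm h (w ++ v) = mapw h w '' fwdIm h v
  | [], v => by simp [mapw]
  | a :: w, v => by
      show h a '' fwdIm h (w ++ v) = (h a ∘ mapw h w) '' fwdIm h v
      rw [Set.image_comp, fwdIm_append w v]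

theorem isCompact_fwdIm (hcont : ∀ j, Continuous (h j)) (w : List (Fin m)) :
    IsCompact (fwdIm h w) := by
  rw [fwdIm_eq]
  exact isCompact_univ.image (mapw_cont h hcont w)

theorem isClosed_fwdIm (hcont : ∀ j, Continuous (h j)) (w : List (Fin m)) :
    IsClosed (fwdIm h w) :=
  (isCompact_fwdIm h hcont w).isClosed

theorem fwdIm_nonempty [Nonempty L] (w : List (Fin m)) : (fwdIm h w).Nonempty := by
  rw [fwdIm_eq]
  exact univ_nonempty.image _

/-- Prepend a letter to an infinite word. -/
def scons {m : ℕ} (a : Fin m) (x : ℕ → Fin m) : ℕ → Fin m :=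
  fun n => Nat.casesOn n a x

theorem wordTrunc_scons (a : Fin m) (x : ℕ → Fin m) (k : ℕ) :
    wordTrunc (scons a x) (k + 1) = a :: wordTrunc x k := by
  unfold wordTrunc
  rw [List.ofFn_succ]
  rfl

theorem wordTrunc_succ (x : ℕ → Fin m) (k : ℕ) :
    wordTrunc x (k + 1) = wordTrunc x k ++ [x k] := by
  unfold wordTrunc
  rw [List.ofFn_succ']
  simp [List.concat_eq_append]

theorem cell_antitone (x : ℕ → Fin m) (k : ℕ) :
    fwdIm h (wordTrunc x (k + 1)) ⊆ fwdIm h (wordTrunc x k) := by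
  rw [wordTrunc_succ, fwdIm_append]
  conv_rhs => rw [fwdIm_eq]
  exact Set.image_mono (subset_univ _)

theorem cell_antitone' (x : ℕ → Fin m) : ∀ {k k' : ℕ}, k ≤ k' →
    fwdIm h (wordTrunc x k') ⊆ fwdIm h (wordTrunc x k) := by
  intro k k' hk
  induction hk with
  | refl => exact subset_rfl
  | step h' ih => exact fun p hp => ih (cell_antitone h x _ hp)
  
theorem fwdLimSet_eq (x : ℕ → Fin m) :
    fwdLimSet h x = ⋂ k : ℕ, fwdIm h (wordTrunc x k) := by
  apply Set.Subset.antisymm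
  · intro p hp
    apply Set.mem_iInter.2
    intro k
    cases k with
    | zero => simp [wordTrunc, fwdIm]
    | succ k => exact Set.mem_iInter.1 hp k
  · exact fun p hp => Set.mem_iInter.2 fun j => Set.mem_iInter.1 hp (j + 1)

theorem fwdLimSet_subset_cell (x : ℕ → Fin m) (k : ℕ) :
    fwdLimSet h x ⊆ fwdIm h (wordTrunc x k) := by
  rw [fwdLimSet_eq]
  exact Set.iInter_subset _ k

theorem isClosed_fwdLimSet (hcont : ∀ j, Continuous (h j)) (x : ℕ → Fin m) :
    IsClosed (fwdLimSet h x) :=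
  isClosed_iInter fun j => isClosed_fwdIm h hcont _

private theorem inj_image_iInter {α β : Type*} {f : α → β} (hf : Function.Injective f)
    (s : ℕ → Set α) : f '' (⋂ i, s i) = ⋂ i, f '' s i := by
  apply Set.Subset.antisymm
  · exact Set.image_iInter_subset s f
  · intro t ht
    obtain ⟨p, hp0, hpt⟩ := Set.mem_iInter.1 ht 0
    refine ⟨p, Set.mem_iInter.2 fun i => ?_, hpt⟩
    obtain ⟨q, hq, hqt⟩ := Set.mem_iInter.1 ht i
    rwa [hf (hqt.trans hpt.symm)] at hq

theorem fwdLimSet_scons (hinj : ∀ j, Function.Injective (h j)) (a : Fin m) (x : ℕ → Fin m) :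
    fwdLimSet h (scons a x) = h a '' fwdLimSet h x := by
  rw [fwdLimSet_eq h x, inj_image_iInter (hinj a)]
  unfold fwdLimSet
  apply Set.iInter_congr
  intro j
  rw [wordTrunc_scons]
  simp [fwdIm]

/-- Concatenation of a finite word and an infinite word. -/
def wcat {m : ℕ} (w : List (Fin m)) (z : ℕ → Fin m) : ℕ → Fin m :=
  w.foldr scons z

theorem wcat_nil (z : ℕ → Fin m) : wcat ([] : List (Fin m)) z = z := rfl

theorem wcat_cons (a : Fin m) (w : List (Fin m)) (z : ℕ → Fin m) :
    wcat (a :: w) z = scons a (wcat w z) := rfl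

theorem fwdLimSet_wcat (hinj : ∀ j, Function.Injective (h j)) :
    ∀ (w : List (Fin m)) (z : ℕ → Fin m),
    fwdLimSet h (wcat w z) = mapw h w '' fwdLimSet h z
  | [], z => by simp [wcat_nil, mapw]
  | a :: w, z => by
      rw [wcat_cons, fwdLimSet_scons h hinj, fwdLimSet_wcat hinj w z]
      exact (Set.image_comp (h a) (mapw h w) _).symm

theorem wcat_apply_lt : ∀ (w : List (Fin m)) (z : ℕ → Fin m) (i : ℕ) (hi : i < w.length),
    wcat w z i = w.get ⟨i, hi⟩
  | a :: w, z, 0, _ => rfl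
  | a :: w, z, i + 1, hi => by
      rw [wcat_cons]
      show wcat w z i = _
      rw [wcat_apply_lt w z i (by simpa using hi)]
      rfl

theorem wcat_apply_add : ∀ (w : List (Fin m)) (z : ℕ → Fin m) (n : ℕ),
    wcat w z (w.length + n) = z n
  | [], z, n => by
      show z (0 + n) = z n
      rw [Nat.zero_add]
  | a :: w, z, n => by
      rw [wcat_cons]
      have hn : (a :: w).length + n = (w.length + n) + 1 := by
        simp [Nat.add_right_comm]
      rw [hn]
      show wcat w z (w.length + n) = z n
      exact wcat_apply_add w z n

theorem wordTrunc_wcat (w : List (Fin m)) (z : ℕ → Fin m) :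
    wordTrunc (wcat w z) w.length = w := by
  apply List.ext_get
  · simp [wordTrunc]
  · intro i h1 h2
    simp only [wordTrunc, List.get_ofFn]
    exact wcat_apply_lt w z i (by simpa [wordTrunc] using h2)


/-- A set of infinite words defined through their length-`k` truncation is closed. -/
theorem isClosed_truncSet [NeZero m] (P : List (Fin m) → Prop) (k : ℕ) :
    IsClosed {x : ℕ → Fin m | P (wordTrunc x k)} := by
  have : {x : ℕ → Fin m | P (wordTrunc x k)} =
      (fun (x : ℕ → Fin m) (i : Fin k) => x i.val) ⁻¹' {v | P (List.ofFn v)} := rfl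
  rw [this]
  have hcont : Continuous (fun (x : ℕ → Fin m) (i : Fin k) => x i.val) :=
    continuous_pi fun i => continuous_apply i.val
  exact (isClosed_discrete _).preimage hcont

theorem level_exists (hcover : (⋃ j, Set.range (h j)) = Set.univ) (y : L) :
    ∀ k : ℕ, ∃ w : List (Fin m), w.length = k ∧ y ∈ fwdIm h w := by
  intro k
  induction k generalizing y with
  | zero => exact ⟨[], rfl, Set.mem_univ y⟩
  | succ k ih =>
      have hy : y ∈ ⋃ j, Set.range (h j) := by rw [hcover]; exact Set.mem_univ y
      obtain ⟨j, t, ht⟩ := Set.mem_iUnion.1 hy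
      obtain ⟨w, hwl, hwm⟩ := ih t
      exact ⟨j :: w, by simp [hwl], ⟨t, hwm, ht⟩⟩

/-- Every point of `L` belongs to some `L_x`. -/
theorem mem_fwdLimSet_exists [NeZero m] (hcover : (⋃ j, Set.range (h j)) = Set.univ)
    (y : L) : ∃ x : ℕ → Fin m, y ∈ fwdLimSet h x := by
  classical
  set F : ℕ → Set (ℕ → Fin m) := fun k => {x | y ∈ fwdIm h (wordTrunc x k)} with hF
  have hclosed : ∀ k, IsClosed (F k) := fun k =>
    isClosed_truncSet (fun w => y ∈ fwdIm h w) k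
  have hdec : ∀ k, F (k + 1) ⊆ F k := fun k x hx => cell_antitone h x k hx
  have hne : ∀ k, (F k).Nonempty := by
    intro k
    obtain ⟨w, hwl, hwm⟩ := level_exists h hcover y k
    refine ⟨wcat w (fun _ => 0), ?_⟩
    show y ∈ fwdIm h (wordTrunc (wcat w (fun _ => 0)) k)
    rw [← hwl, wordTrunc_wcat]
    exact hwm
  have hcpt : IsCompact (F 0) := (hclosed 0).isCompact
  obtain ⟨x, hx⟩ := IsCompact.nonempty_iInter_of_sequence_nonempty_isCompact_isClosed
    F hdec hne hcpt hclosed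
  refine ⟨x, Set.mem_iInter.2 fun j => ?_⟩
  exact Set.mem_iInter.1 hx (j + 1)

/-- If the limit set along `x` is inside an open set, some cell along `x` already is. -/
theorem exists_cell_subset (hcont : ∀ j, Continuous (h j)) (x : ℕ → Fin m)
    {U : Set L} (hU : IsOpen U) (hsub : fwdLimSet h x ⊆ U) :
    ∃ k, fwdIm h (wordTrunc x k) ⊆ U := by
  by_contra hcon
  push_neg at hcon
  have hne : ∀ k, (fwdIm h (wordTrunc x k) ∩ Uᶜ).Nonempty := by
    intro k
    obtain ⟨p, hp, hpU⟩ := Set.not_subset.1 (hcon k)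
    exact ⟨p, hp, hpU⟩
  have hmem := IsCompact.nonempty_iInter_of_sequence_nonempty_isCompact_isClosed
    (fun k => fwdIm h (wordTrunc x k) ∩ Uᶜ)
    (fun k => Set.inter_subset_inter_left _ (cell_antitone h x k)) hne
    (((isClosed_fwdIm h hcont _).inter hU.isClosed_compl).isCompact)
    (fun k => (isClosed_fwdIm h hcont _).inter hU.isClosed_compl)
  obtain ⟨p, hp⟩ := hmem
  have hp1 : p ∈ fwdLimSet h x := by
    rw [fwdLimSet_eq]
    exact Set.mem_iInter.2 fun k => (Set.mem_iInter.1 hp k).1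
  exact (Set.mem_iInter.1 hp 0).2 (hsub hp1)

/-- Uniform depth at which all cells are monochromatic w.r.t. a clopen set. -/
theorem exists_uniform_K [NeZero m] (hcont : ∀ j, Continuous (h j))
    (hconn : ∀ x : ℕ → Fin m, IsConnected (fwdLimSet h x))
    {Q : Set L} (hQ : IsClopen Q) :
    ∃ K : ℕ, ∀ x : ℕ → Fin m,
      fwdIm h (wordTrunc x K) ⊆ Q ∨ fwdIm h (wordTrunc x K) ⊆ Qᶜ := by
  classical
  set G : ℕ → Set (ℕ → Fin m) := fun k =>
    {x | ¬ (fwdIm h (wordTrunc x k) ⊆ Q ∨ fwdIm h (wordTrunc x k) ⊆ Qᶜ)} with hG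
  have hclosed : ∀ k, IsClosed (G k) := fun k =>
    isClosed_truncSet (fun w => ¬ (fwdIm h w ⊆ Q ∨ fwdIm h w ⊆ Qᶜ)) k
  have hdec : ∀ k, G (k + 1) ⊆ G k := by
    intro k x hx hgood
    exact hx (hgood.imp (fun hs => (cell_antitone h x k).trans hs)
      (fun hs => (cell_antitone h x k).trans hs))
  have hempty : ∀ x : ℕ → Fin m, ∃ k, x ∉ G k := by
    intro x
    have hdi : fwdLimSet h x ⊆ Q ∨ fwdLimSet h x ⊆ Qᶜ := by
      by_cases hi : (fwdLimSet h x ∩ Q).Nonempty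
      · exact Or.inl ((hconn x).isPreconnected.subset_isClopen hQ hi)
      · refine Or.inr fun p hp => ?_
        by_contra hpQ
        exact hi ⟨p, hp, not_not.1 hpQ⟩
    rcases hdi with hdi | hdi
    · obtain ⟨k, hk⟩ := exists_cell_subset h hcont x hQ.isOpen hdi
      exact ⟨k, fun hmem => hmem (Or.inl hk)⟩
    · obtain ⟨k, hk⟩ := exists_cell_subset h hcont x hQ.compl.isOpen hdi
      exact ⟨k, fun hmem => hmem (Or.inr hk)⟩
  by_contra hcon
  push_neg at hcon
  have hne : ∀ k, (G k).Nonempty := by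
    intro k
    obtain ⟨x, hx⟩ := hcon k
    exact ⟨x, fun hor => hor.elim hx.1 hx.2⟩
  obtain ⟨x, hx⟩ := IsCompact.nonempty_iInter_of_sequence_nonempty_isCompact_isClosed
    G hdec hne (hclosed 0).isCompact hclosed
  obtain ⟨k, hk⟩ := hempty x
  exact hk (Set.mem_iInter.1 hx k)


theorem wordTrunc_congr {x x' : ℕ → Fin m} {l : ℕ} (hag : ∀ i, i < l → x i = x' i) :
    wordTrunc x l = wordTrunc x' l :=
  congrArg List.ofFn (funext fun i => hag i.val i.isLt)

theorem wordTrunc_length (x : ℕ → Fin m) (l : ℕ) : (wordTrunc x l).length = l := by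
  simp [wordTrunc]

theorem wcat_trunc_apply_lt (x z : ℕ → Fin m) {l i : ℕ} (hi : i < l) :
    wcat (wordTrunc x l) z i = x i := by
  have hi' : i < (wordTrunc x l).length := by rw [wordTrunc_length]; exact hi
  rw [wcat_apply_lt _ z i hi']
  simp [wordTrunc]

theorem wcat_trunc_apply_len (x z : ℕ → Fin m) (l : ℕ) :
    wcat (wordTrunc x l) z l = z 0 := by
  have := wcat_apply_add (wordTrunc x l) z 0
  rwa [wordTrunc_length, Nat.add_zero] at this

theorem mem_range_head (x : ℕ → Fin m) {p : L} (hp : p ∈ fwdLimSet h x) :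
    p ∈ Set.range (h (x 0)) := by
  have h1 : p ∈ fwdIm h (wordTrunc x 1) := fwdLimSet_subset_cell h x 1 hp
  have : wordTrunc x 1 = [x 0] := by simp [wordTrunc, List.ofFn_succ]
  rw [this] at h1
  simpa [fwdIm] using h1

theorem fin3_graph : ∀ (t : Fin 3 → Bool) (a : Fin 3 → Fin 3),
    (∀ j, a j ≠ j) → (∀ j, t j = t (a j)) → ∀ i i', t i = t i' := by decide

theorem exists_clopen_of_not_connected [Nonempty L] (hdis : ¬ ConnectedSpace L) :
    ∃ Q : Set L, IsClopen Q ∧ Q.Nonempty ∧ Qᶜ.Nonempty := by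
  have hnp : ¬ IsPreconnected (Set.univ : Set L) := by
    intro hP
    exact hdis { toPreconnectedSpace := ⟨hP⟩, toNonempty := inferInstance }
  unfold IsPreconnected at hnp
  push_neg at hnp
  obtain ⟨u, v, hu, hv, hcov, hne1, hne2, hdisj⟩ := hnp
  have huv : u ∩ v = ∅ := by simpa using hdisj
  have hvc : uᶜ = v := by
    apply Set.Subset.antisymm
    · intro p hp
      rcases hcov (Set.mem_univ p) with hpu | hpv
      · exact absurd hpu hp
      · exact hpv
    · intro p hp hpu
      exact absurd (Set.mem_inter hpu hp) (by rw [huv]; exact Set.notMem_empty p)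
  refine ⟨u, ⟨?_, hu⟩, by simpa using hne1, ?_⟩
  · rw [← isOpen_compl_iff, hvc]; exact hv
  · rw [hvc]; simpa using hne2

end FSSAux

open FSSAux

theorem crux_lemma {L : Type*} [MetricSpace L] [CompactSpace L] [Nonempty L]
    (h : Fin 3 → L → L) (hcont : ∀ j, Continuous (h j))
    (hinj : ∀ j, Function.Injective (h j))
    (hcover : (⋃ j, Set.range (h j)) = Set.univ)
    (hconn : ∀ x : ℕ → Fin 3, IsConnected (fwdLimSet h x))
    (hdis : ¬ ConnectedSpace L)
    (yj : Fin 3 → L) (hyj : ∀ j, yj j ∈ fwdLimSet h (fun _ => j)) :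
    ∃ j, connectedComponent (yj j) ⊆ Set.range (h j) := by
  classical
  by_contra hno
  push_neg at hno
  have hz : ∀ j, ∃ z, z ∈ connectedComponent (yj j) ∧ z ∉ Set.range (h j) := by
    intro j
    obtain ⟨z, hz1, hz2⟩ := Set.not_subset.1 (hno j)
    exact ⟨z, hz1, hz2⟩
  choose z hz1 hz2 using hz
  have hyw : ∀ j, ∃ x : ℕ → Fin 3, z j ∈ fwdLimSet h x :=
    fun j => mem_fwdLimSet_exists h hcover (z j)
  choose yw hyw using hyw
  set a : Fin 3 → Fin 3 := fun j => yw j 0 with ha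
  have hane : ∀ j, a j ≠ j := by
    intro j haj
    have hm := mem_range_head h (yw j) (hyw j)
    rw [show yw j 0 = j from haj] at hm
    exact hz2 j hm
  have hLsub : ∀ j, fwdLimSet h (yw j) ⊆ connectedComponent (yj j) := by
    intro j
    have h1 : fwdLimSet h (yw j) ⊆ connectedComponent (z j) :=
      (hconn (yw j)).isPreconnected.subset_connectedComponent (hyw j)
    rwa [connectedComponent_eq (hz1 j)]
  obtain ⟨Q, hQ, hQne, hQcne⟩ := exists_clopen_of_not_connected hdis
  obtain ⟨K, hK⟩ := exists_uniform_K h hcont hconn hQ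
  -- main tree induction
  have main : ∀ n l, l + n = K → ∀ x x' : ℕ → Fin 3, (∀ i, i < l → x i = x' i) →
      fwdIm h (wordTrunc x K) ⊆ Q → fwdIm h (wordTrunc x' K) ⊆ Q := by
    intro n
    induction n with
    | zero =>
        intro l hl x x' hag hx
        have hlK : l = K := by omega
        rwa [← wordTrunc_congr (fun i hi => hag i (by omega : i < l))]
    | succ n IH =>
        intro l hl x x' hag hx
        have hl' : (l + 1) + n = K := by omega
        set w : List (Fin 3) := wordTrunc x l with hw
        -- the three "colors"
        set s : Fin 3 → Prop := fun b =>
          fwdIm h (wordTrunc (wcat w (fun _ => b)) K) ⊆ Q with hs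
        have edge : ∀ j, (s j ↔ s (a j)) := by
          intro j
          set Sj : Set L := mapw h w '' connectedComponent (yj j) with hSj
          have hSpre : IsPreconnected Sj :=
            isPreconnected_connectedComponent.image _ ((mapw_cont h hcont w).continuousOn)
          set q1 : L := mapw h w (yj j) with hq1
          have hq1S : q1 ∈ Sj := Set.mem_image_of_mem _ mem_connectedComponent
          have hq1cell : q1 ∈ fwdIm h (wordTrunc (wcat w (fun _ => j)) K) := by
            apply fwdLimSet_subset_cell
            rw [fwdLimSet_wcat h hinj]
            exact Set.mem_image_of_mem _ (hyj j)
          set q2 : L := mapw h w (z j) with hq2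
          have hq2S : q2 ∈ Sj := Set.mem_image_of_mem _ (hz1 j)
          have hq2cell : q2 ∈ fwdIm h (wordTrunc (wcat w (yw j)) K) := by
            apply fwdLimSet_subset_cell
            rw [fwdLimSet_wcat h hinj]
            exact Set.mem_image_of_mem _ (hyw j)
          -- transfer along the (l+1)-agreement between `wcat w (yw j)` and `wcat w (const (a j))`
          have hagr : ∀ i, i < l + 1 → wcat w (yw j) i = wcat w (fun _ => a j) i := by
            intro i hi
            rcases Nat.lt_or_ge i l with hil | hil
            · rw [hw, wcat_trunc_apply_lt x _ hil, wcat_trunc_apply_lt x _ hil]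
            · have : i = l := by omega
              subst this
              rw [hw, wcat_trunc_apply_len, wcat_trunc_apply_len]
          have tr : (fwdIm h (wordTrunc (wcat w (yw j)) K) ⊆ Q) ↔ s (a j) :=
            ⟨fun hh => IH (l+1) hl' _ _ hagr hh,
             fun hh => IH (l+1) hl' _ _ (fun i hi => (hagr i hi).symm) hh⟩
          by_cases hSQ : (Sj ∩ Q).Nonempty
          · have hSsub : Sj ⊆ Q := hSpre.subset_isClopen hQ hSQ
            have hsj : s j := by
              rcases hK (wcat w (fun _ => j)) with hc | hc
              · exact hc
              · exact absurd (hc hq1cell) (by simp [hSsub hq1S])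
            have hsaj : s (a j) := by
              apply tr.1
              rcases hK (wcat w (yw j)) with hc | hc
              · exact hc
              · exact absurd (hc hq2cell) (by simp [hSsub hq2S])
            exact iff_of_true hsj hsaj
          · have hSsub : ∀ p ∈ Sj, p ∉ Q := fun p hp hpQ => hSQ ⟨p, hp, hpQ⟩
            have hsj : ¬ s j := fun hc => hSsub q1 hq1S (hc hq1cell)
            have hsaj : ¬ s (a j) := fun hc => hSsub q2 hq2S (tr.2 hc hq2cell)
            exact iff_of_false hsj hsaj
        -- transfer along the graph on `Fin 3`
        set t : Fin 3 → Bool := fun b => decide (s b) with htb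
        have ht : ∀ j, t j = t (a j) := fun j => decide_eq_decide.2 (edge j)
        have hcst : s (x l) ↔ s (x' l) := decide_eq_decide.1 (fin3_graph t a hane ht (x l) (x' l))
        have hagx : ∀ i, i < l + 1 → x i = wcat w (fun _ => x l) i := by
          intro i hi
          rcases Nat.lt_or_ge i l with hil | hil
          · rw [hw, wcat_trunc_apply_lt x _ hil]
          · have : i = l := by omega
            subst this
            rw [hw, wcat_trunc_apply_len]
        have hagx' : ∀ i, i < l + 1 → wcat w (fun _ => x' l) i = x' i := by
          intro i hi
          rcases Nat.lt_or_ge i l with hil | hil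
          · rw [hw, wcat_trunc_apply_lt x _ hil]
            exact hag i hil
          · have : i = l := by omega
            subst this
            rw [hw, wcat_trunc_apply_len]
        have hsxl : s (x l) := IH (l+1) hl' x _ hagx hx
        exact IH (l+1) hl' _ x' hagx' (hcst.1 hsxl)
  -- conclude: both colors occur, contradiction
  obtain ⟨q, hqQ⟩ := hQne
  obtain ⟨q', hq'Q⟩ := hQcne
  obtain ⟨xq, hxq⟩ := mem_fwdLimSet_exists h hcover q
  obtain ⟨xq', hxq'⟩ := mem_fwdLimSet_exists h hcover q'
  have hcellq : fwdIm h (wordTrunc xq K) ⊆ Q := by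
    rcases hK xq with hc | hc
    · exact hc
    · exact absurd (hc (fwdLimSet_subset_cell h xq K hxq)) (by simp [hqQ])
  have hcellq' : fwdIm h (wordTrunc xq' K) ⊆ Q :=
    main K 0 (by omega) xq xq' (fun i hi => absurd hi (Nat.not_lt_zero i)) hcellq
  exact hq'Q (hcellq' (fwdLimSet_subset_cell h xq' K hxq'))

/-- If `(L, (h₁, h₂, h₃))` is a forward self-similar system with `m = 3` whose generators
are injective, every `L_x` is connected, and `L` is disconnected, then `L` has infinitely
many connected components and there is a `j ∈ {1, 2, 3}` such that `L_{(j)^∞}` is a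
connected component of `L`. -/
theorem forward_three_maps_disconnected
    {L : Type*} [MetricSpace L] [CompactSpace L] [Nonempty L]
    (h : Fin 3 → L → L) (hcont : ∀ j, Continuous (h j))
    (hinj : ∀ j, Function.Injective (h j))
    (hcover : (⋃ j, Set.range (h j)) = Set.univ)
    (hconn : ∀ x : ℕ → Fin 3, IsConnected (fwdLimSet h x))
    (hdis : ¬ ConnectedSpace L) :
    {C : Set L | ∃ y : L, C = connectedComponent y}.Infinite ∧
    ∃ j : Fin 3, ∃ y : L, fwdLimSet h (fun _ => j) = connectedComponent y := by
  classical
  have hyex : ∀ j : Fin 3, ∃ y, y ∈ fwdLimSet h (fun _ => j) := fun j => (hconn _).nonempty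
  choose yj hyj using hyex
  obtain ⟨j, hj⟩ := crux_lemma h hcont hinj hcover hconn hdis yj hyj
  set D : Set L := connectedComponent (yj j) with hD
  have hsc : scons j (fun _ => j) = (fun _ => (j : Fin 3)) := by
    funext n; cases n <;> rfl
  have hLfix : fwdLimSet h (fun _ => j) = h j '' fwdLimSet h (fun _ => j) := by
    conv_lhs => rw [← hsc]
    exact fwdLimSet_scons h hinj j _
  have hLD : fwdLimSet h (fun _ => j) ⊆ D :=
    (hconn _).isPreconnected.subset_connectedComponent (hyj j)
  have hyD : yj j ∈ D := mem_connectedComponent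
  have himD : h j '' D ⊆ D := by
    have hpre : IsPreconnected (h j '' D) :=
      isPreconnected_connectedComponent.image _ (hcont j).continuousOn
    have hmem : h j (yj j) ∈ h j '' D := Set.mem_image_of_mem _ hyD
    have hmemL : h j (yj j) ∈ fwdLimSet h (fun _ => j) := by
      rw [hLfix]; exact Set.mem_image_of_mem _ (hyj j)
    have hmemD : h j (yj j) ∈ D := hLD hmemL
    have hsub := hpre.subset_connectedComponent hmem
    rwa [← connectedComponent_eq hmemD] at hsub
  have hE : h j '' (h j ⁻¹' D) = D := by
    apply Set.Subset.antisymm (Set.image_preimage_subset _ _)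
    intro d hd
    obtain ⟨e, he⟩ := hj hd
    exact ⟨e, by rw [Set.mem_preimage, he]; exact hd, he⟩
  have hEpre : IsPreconnected (h j ⁻¹' D) := by
    have hemb := (hcont j).isClosedEmbedding (hinj j)
    refine (hemb.toIsEmbedding.toIsInducing.isPreconnected_image).1 ?_
    rw [hE]
    exact isPreconnected_connectedComponent
  have hDE : D ⊆ h j ⁻¹' D := fun d hd => himD (Set.mem_image_of_mem _ hd)
  have hED : h j ⁻¹' D ⊆ D := hEpre.subset_connectedComponent (hDE hyD)
  have hpreq : h j ⁻¹' D = D := Set.Subset.antisymm hED hDE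
  have hfix : h j '' D = D := by
    conv_lhs => rw [← hpreq]
    exact hE
  have hiter : ∀ k, mapw h (List.replicate k j) '' D = D := by
    intro k
    induction k with
    | zero => simp [mapw]
    | succ k ih =>
        show (h j ∘ mapw h (List.replicate k j)) '' D = D
        rw [Set.image_comp, ih, hfix]
  have htr : ∀ k, wordTrunc (fun _ => (j : Fin 3)) k = List.replicate k j :=
    fun k => List.ofFn_const k j
  have hpart2 : fwdLimSet h (fun _ => j) = D := by
    apply Set.Subset.antisymm hLD
    intro d hd
    rw [fwdLimSet_eq]
    refine Set.mem_iInter.2 fun k => ?_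
    rw [htr k, fwdIm_eq]
    have hmem : d ∈ mapw h (List.replicate k j) '' D := by rw [hiter k]; exact hd
    exact (Set.image_mono (Set.subset_univ D)) hmem
  constructor
  · by_contra hfin
    rw [Set.not_infinite] at hfin
    set S : Set (Set L) := {C : Set L | ∃ y, C = connectedComponent y} with hS
    have hclosedC : ∀ C ∈ S, IsClosed C := by
      rintro C ⟨u, rfl⟩
      exact isClosed_connectedComponent
    have hcompl : Dᶜ = ⋃₀ (S \ {D}) := by
      ext p
      constructor
      · intro hp
        refine ⟨connectedComponent p, ⟨⟨p, rfl⟩, ?_⟩, mem_connectedComponent⟩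
        intro hEq
        rw [Set.mem_singleton_iff] at hEq
        exact hp (hEq ▸ mem_connectedComponent)
      · rintro ⟨C, ⟨⟨u, rfl⟩, hCne⟩, hpC⟩ hpD
        apply hCne
        rw [Set.mem_singleton_iff]
        rw [connectedComponent_eq hpC]
        exact (connectedComponent_eq hpD).symm
    have hclosed : IsClosed (⋃₀ (S \ {D})) := by
      rw [Set.sUnion_eq_biUnion]
      exact Set.Finite.isClosed_biUnion (hfin.subset Set.diff_subset)
        (fun C hC => hclosedC C hC.1)
    have hDopen : IsOpen D := by
      rw [← isClosed_compl_iff, hcompl]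
      exact hclosed
    obtain ⟨k, hk⟩ := exists_cell_subset h hcont (fun _ => j) hDopen (by rw [hpart2])
    have huniv : (Set.univ : Set L) ⊆ D := by
      intro p _
      have hmem : mapw h (List.replicate k j) p ∈ fwdIm h (wordTrunc (fun _ => j) k) := by
        rw [htr k, fwdIm_eq]
        exact Set.mem_image_of_mem _ (Set.mem_univ p)
      have hmem2 : mapw h (List.replicate k j) p ∈ mapw h (List.replicate k j) '' D := by
        rw [hiter k]
        exact hk hmem
      obtain ⟨d, hdD, hde⟩ := hmem2
      rwa [← mapw_inj h hinj (List.replicate k j) hde]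
    have hueq : (Set.univ : Set L) = D := Set.Subset.antisymm huniv (Set.subset_univ D)
    exact hdis { toPreconnectedSpace := ⟨by rw [hueq]; exact isPreconnected_connectedComponent⟩,
                 toNonempty := inferInstance }
  · exact ⟨j, yj j, hpart2⟩
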